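/- If G is a connected graph of order n ≥ 2 and H is a family of n δ-regular graphs each of girth at least 5, then the corona product G⊙H is 2δ-metric dimensional. -/

import Mathlib

open SimpleGraph

/-- `S` is a `k`-metric generator for `G`: every pair of distinct vertices is
distinguished (has different distances) by at least `k` vertices of `S`. -/
def kMetricGen {V : Type*} [Fintype V] (G : SimpleGraph V) (k : ℕ) (S : Set V) : Prop :=
  ∀ u v : V, u ≠ v → ∃ T : Finset V, ↑T ⊆ S ∧ k ≤ T.card ∧ ∀ w ∈ T, G.dist u w ≠ G.dist v w

/-- `G` is `k`-metric dimensional: `k` is the largest integer admitting a `k`-metric generator. -/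
def kMetricDimensional {V : Type*} [Fintype V] (G : SimpleGraph V) (k : ℕ) : Prop :=
  (∃ S : Set V, kMetricGen G k S) ∧ ∀ k' : ℕ, (∃ S : Set V, kMetricGen G k' S) → k' ≤ k

/-- The `k`-metric dimension of `G`. -/
noncomputable def kMetricDim {V : Type*} [Fintype V] (G : SimpleGraph V) (k : ℕ) : ℕ :=
  sInf {m | ∃ S : Finset V, kMetricGen G k ↑S ∧ S.card = m}

/-- A `k`-metric basis: a minimum-cardinality `k`-metric generator. -/
def kMetricBasis {V : Type*} [Fintype V] (G : SimpleGraph V) (k : ℕ) (B : Finset V) : Prop :=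
  kMetricGen G k ↑B ∧ ∀ T : Finset V, kMetricGen G k ↑T → B.card ≤ T.card

/-- Auxiliary relation for the corona product. -/
def coronaRel {V : Type*} {W : V → Type*} (G : SimpleGraph V) (H : ∀ v, SimpleGraph (W v)) :
    (V ⊕ (Σ v, W v)) → (V ⊕ (Σ v, W v)) → Prop
  | Sum.inl a, Sum.inl b => G.Adj a b
  | Sum.inl a, Sum.inr b => a = b.1
  | Sum.inr a, Sum.inr b => ∃ h : a.1 = b.1, (H b.1).Adj (h ▸ a.2) b.2
  | _, _ => False

/-- The corona product `G ⊙ 𝓗`: one copy of `G`, and each vertex `v` of `G` joined by an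
edge to every vertex of its own copy of `H v`. -/
def corona {V : Type*} {W : V → Type*} (G : SimpleGraph V) (H : ∀ v, SimpleGraph (W v)) :
    SimpleGraph (V ⊕ (Σ v, W v)) :=
  SimpleGraph.fromRel (coronaRel G H)

/-- The join `K₁ + H`: a new vertex (`none`) adjacent to every vertex of `H`. -/
def K1join {U : Type*} (H : SimpleGraph U) : SimpleGraph (Option U) :=
  SimpleGraph.fromRel (fun x y => match x, y with
    | none, some _ => True
    | some a, some b => H.Adj a b
    | _, _ => False)

/-- `𝒞(H) = min_{x ≠ y} |(N(x) △ N(y)) ∪ {x,y}|`. -/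
noncomputable def CC {U : Type*} (H : SimpleGraph U) : ℕ :=
  sInf {m | ∃ x y : U, x ≠ y ∧
    (symmDiff (H.neighborSet x) (H.neighborSet y) ∪ {x, y}).ncard = m}

/-! In `G ⊙ H` the base vertex `v` is adjacent to every vertex of the copy `H v` and is the
only vertex outside that copy with a neighbour in it, so `d(u, (v, z)) = d(u, v) + 1` for all
`u` outside the copy. Hence every pair of vertices not inside a single copy is distinguished
by a whole copy, of order at least `2δ`, while two vertices `x, y` of one copy are
distinguished exactly by the vertices of `N(x) △ N(y) ∪ {x, y}` of that copy (the others are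
at distance 2 from both). Girth at least 5 makes adjacent vertices have disjoint
neighbourhoods and non-adjacent ones share at most one neighbour, so this set has at least
`2δ` elements, and exactly `|N(x) ∪ N(y)| = 2δ` for an edge `xy`. -/

open Finset
open scoped symmDiff

namespace Finset

lemma card_symmDiff_add_two_mul_card_inter {α : Type*} [DecidableEq α] (s t : Finset α) :
    #(s ∆ t) + 2 * #(s ∩ t) = #s + #t := by
  rw [symmDiff_eq_sup_sdiff_inf, sup_eq_union, inf_eq_inter,
    card_sdiff_of_subset inter_subset_union, ← card_union_add_card_inter]
  have := card_le_card (inter_subset_union (s := s) (t := t))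
  omega

end Finset

namespace SimpleGraph

section Girth
variable {α : Type*} {G : SimpleGraph α}

lemma exists_adj_of_girth_ne_zero (h : G.girth ≠ 0) : ∃ x y, G.Adj x y := by
  by_contra! hG
  rw [← eq_bot_iff_forall_not_adj] at hG
  exact h (girth_eq_zero.mpr (hG ▸ isAcyclic_bot))

lemma not_adj_of_adj_of_adj_of_four_le_girth (h : 4 ≤ G.girth) {x y z : α}
    (hxy : G.Adj x y) (hyz : G.Adj y z) : ¬ G.Adj z x := by
  intro hzx
  have hc : (Walk.cons hxy (Walk.cons hyz (Walk.cons hzx Walk.nil))).IsCycle := by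
    simp [Walk.isCycle_def, Walk.isTrail_def, hxy.ne, hyz.ne, hzx.ne, hxy.ne',
      hzx.ne']
  have := girth_le_length hc
  simp at this
  omega

lemma eq_of_adj_of_adj_of_five_le_girth (h : 5 ≤ G.girth) {x y z z' : α} (hxy : x ≠ y)
    (hxz : G.Adj x z) (hzy : G.Adj z y) (hyz' : G.Adj y z') (hz'x : G.Adj z' x) :
    z = z' := by
  by_contra hzz'
  have hc : (Walk.cons hxz (Walk.cons hzy (Walk.cons hyz'
      (Walk.cons hz'x Walk.nil)))).IsCycle := by
    simp [Walk.isCycle_def, Walk.isTrail_def, hzz', hxy, hxy.symm, hxz.ne, hxz.ne',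
      hzy.ne, hyz'.ne, hz'x.ne, hz'x.ne']
  have := girth_le_length hc
  simp at this
  omega

variable [G.LocallyFinite]

lemma disjoint_neighborFinset_of_adj (h : 4 ≤ G.girth) {x y : α} (hxy : G.Adj x y) :
    Disjoint (G.neighborFinset x) (G.neighborFinset y) :=
  Finset.disjoint_left.mpr fun z hzx hzy =>
    not_adj_of_adj_of_adj_of_four_le_girth h hxy ((G.mem_neighborFinset y z).mp hzy)
      ((G.mem_neighborFinset x z).mp hzx).symm

lemma card_inter_neighborFinset_le_one [DecidableEq α] (h : 5 ≤ G.girth) {x y : α}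
    (hxy : x ≠ y) : #(G.neighborFinset x ∩ G.neighborFinset y) ≤ 1 :=
  Finset.card_le_one.mpr fun z hz z' hz' => by
    simp only [Finset.mem_inter, mem_neighborFinset] at hz hz'
    exact eq_of_adj_of_adj_of_five_le_girth h hxy hz.1 hz.2.symm hz'.2 hz'.1.symm

end Girth

section Regular
variable {α : Type*} {G : SimpleGraph α} [G.LocallyFinite] {δ : ℕ}

lemma card_neighborFinset_union_of_adj [DecidableEq α] (hreg : G.IsRegularOfDegree δ)
    (h : 4 ≤ G.girth) {x y : α} (hxy : G.Adj x y) :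
    #(G.neighborFinset x ∪ G.neighborFinset y) = 2 * δ := by
  rw [card_union_of_disjoint (disjoint_neighborFinset_of_adj h hxy),
    card_neighborFinset_eq_degree, card_neighborFinset_eq_degree, hreg.degree_eq, hreg.degree_eq,
    two_mul]

lemma two_mul_le_card_of_isRegularOfDegree [Fintype α] (hreg : G.IsRegularOfDegree δ)
    (h : 4 ≤ G.girth) : 2 * δ ≤ Fintype.card α := by
  classical
  obtain ⟨x, y, hxy⟩ := exists_adj_of_girth_ne_zero (G := G) (by omega)
  rw [← card_neighborFinset_union_of_adj hreg h hxy]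
  exact card_le_univ _

lemma two_mul_le_card_symmDiff_neighborFinset_union [DecidableEq α]
    (hreg : G.IsRegularOfDegree δ) (h : 5 ≤ G.girth) {x y : α} (hxy : x ≠ y) :
    2 * δ ≤ #(G.neighborFinset x ∆ G.neighborFinset y ∪ {x, y}) := by
  have hcount := card_symmDiff_add_two_mul_card_inter (G.neighborFinset x) (G.neighborFinset y)
  rw [card_neighborFinset_eq_degree, card_neighborFinset_eq_degree,
    hreg.degree_eq, hreg.degree_eq] at hcount
  by_cases hadj : G.Adj x y
  · rw [disjoint_iff_inter_eq_empty.mp (disjoint_neighborFinset_of_adj (by omega) hadj),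
      card_empty] at hcount
    exact (by omega : 2 * δ ≤ _).trans (card_le_card subset_union_left)
  · have hinter := card_inter_neighborFinset_le_one h hxy
    have hpair : Disjoint (G.neighborFinset x ∆ G.neighborFinset y) {x, y} := by
      simp [mem_symmDiff, hadj, G.adj_comm y x]
    rw [card_union_of_disjoint hpair, card_pair hxy]
    omega

end Regular

section Dist
variable {α : Type*} {G : SimpleGraph α}

lemma dist_eq_two_of_adj_of_adj {x y z : α} (hxz : x ≠ z) (hnadj : ¬ G.Adj x z)
    (hxy : G.Adj x y) (hyz : G.Adj y z) : G.dist x z = 2 :=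
  le_antisymm (by simpa using dist_le (Walk.cons hxy hyz.toWalk))
    ((hxy.reachable.trans hyz.reachable).one_lt_dist_of_ne_of_not_adj hxz hnadj)

lemma Connected.dist_eq_dist_add_one_of_gate (hG : G.Connected) {S : Set α} {c : α}
    (hc : ∀ s ∈ S, G.Adj c s) (hgate : ∀ u ∉ S, ∀ s ∈ S, G.Adj u s → u = c)
    {u s : α} (hu : u ∉ S) (hs : s ∈ S) : G.dist u s = G.dist u c + 1 := by
  have hwalk : ∀ {v : α} (p : G.Walk v s), v ∉ S → G.dist v c + 1 ≤ p.length := by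
    intro v p
    induction p with
    | nil => exact fun hv => absurd hs hv
    | @cons v w t hvw p ih =>
      intro hv
      rw [Walk.length_cons]
      by_cases hw : w ∈ S
      · rw [hgate v hv w hw hvw, dist_self]
        omega
      · have hstep : G.dist v c ≤ G.dist v w + G.dist w c := hG.dist_triangle
        rw [dist_eq_one_iff_adj.mpr hvw] at hstep
        have := ih hs hw
        omega
  refine le_antisymm ?_ ?_
  · calc G.dist u s ≤ G.dist u c + G.dist c s := hG.dist_triangle
      _ = G.dist u c + 1 := by rw [dist_eq_one_iff_adj.mpr (hc s hs)]
  · obtain ⟨p, hp⟩ := hG.exists_walk_length_eq_dist u s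
    exact hp ▸ hwalk p hu

lemma Embedding.dist_ne_dist_of_mem {β : Type*} {H : SimpleGraph β} (f : H ↪g G)
    (hG : G.Connected) {x y z : β} (hxy : x ≠ y)
    (hz : z ∈ H.neighborSet x ∆ H.neighborSet y ∪ {x, y}) :
    G.dist (f x) (f z) ≠ G.dist (f y) (f z) := by
  have hfxy : f x ≠ f y := f.injective.ne hxy
  rcases hz with (⟨hxz, hyz⟩ | ⟨hyz, hxz⟩) | (rfl | rfl)
  · rw [dist_eq_one_iff_adj.mpr (f.map_adj_iff.mpr hxz)]
    exact fun h => hyz (f.map_adj_iff.mp (dist_eq_one_iff_adj.mp h.symm))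
  · rw [dist_eq_one_iff_adj.mpr (f.map_adj_iff.mpr hyz)]
    exact fun h => hxz (f.map_adj_iff.mp (dist_eq_one_iff_adj.mp h))
  · rw [dist_self]
    exact (hG.pos_dist_of_ne hfxy.symm).ne
  · rw [dist_self]
    exact (hG.pos_dist_of_ne hfxy).ne'

end Dist

end SimpleGraph

/-- The set `D_G(u, v)` of vertices distinguishing `u` and `v`. -/
noncomputable def distinguishingSet {V : Type*} [Fintype V] (G : SimpleGraph V) (u v : V) :
    Finset V :=
  {w | G.dist u w ≠ G.dist v w}

section MetricDimension
variable {V : Type*} [Fintype V] {G : SimpleGraph V}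

lemma mem_distinguishingSet {u v w : V} :
    w ∈ distinguishingSet G u v ↔ G.dist u w ≠ G.dist v w := by
  simp [distinguishingSet]

lemma distinguishingSet_comm (u v : V) : distinguishingSet G u v = distinguishingSet G v u := by
  ext w
  simp only [mem_distinguishingSet, ne_comm]

lemma card_le_card_distinguishingSet {β : Type*} (f : β ↪ V) (s : Finset β) {u v : V}
    (h : ∀ z ∈ s, G.dist u (f z) ≠ G.dist v (f z)) : #s ≤ #(distinguishingSet G u v) := by
  rw [← card_map f]
  refine card_le_card fun w hw => ?_
  obtain ⟨z, hz, rfl⟩ := mem_map.mp hw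
  exact mem_distinguishingSet.mpr (h z hz)

lemma kMetricDimensional_of_forall_le_card {k : ℕ}
    (hle : ∀ u v, u ≠ v → k ≤ #(distinguishingSet G u v))
    (hex : ∃ u v, u ≠ v ∧ #(distinguishingSet G u v) ≤ k) : kMetricDimensional G k := by
  refine ⟨⟨Set.univ, fun u v huv => ⟨distinguishingSet G u v, by simp, hle u v huv,
    fun w hw => mem_distinguishingSet.mp hw⟩⟩, ?_⟩
  rintro k' ⟨S, hS⟩
  obtain ⟨u, v, huv, hcard⟩ := hex
  obtain ⟨T, -, hk'T, hT⟩ := hS u v huv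
  calc k' ≤ #T := hk'T
    _ ≤ #(distinguishingSet G u v) :=
      card_le_card fun w hw => mem_distinguishingSet.mpr (hT w hw)
    _ ≤ k := hcard

end MetricDimension

section Corona
open Sum
variable {V : Type*} {W : V → Type*} {G : SimpleGraph V} {H : ∀ v, SimpleGraph (W v)}

@[simp]
lemma corona_adj_inl_inl {a b : V} : (corona G H).Adj (inl a) (inl b) ↔ G.Adj a b := by
  simpa [corona, coronaRel, G.adj_comm b a] using fun h : G.Adj a b => h.ne

@[simp]
lemma corona_adj_inl_inr {a : V} {b : Σ v, W v} :
    (corona G H).Adj (inl a) (inr b) ↔ a = b.1 := by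
  simp [corona, coronaRel]

@[simp]
lemma corona_adj_inr_inr_mk {k : V} {x y : W k} :
    (corona G H).Adj (inr ⟨k, x⟩) (inr ⟨k, y⟩) ↔ (H k).Adj x y := by
  simpa [corona, coronaRel, (H k).adj_comm y x] using fun h : (H k).Adj x y => h.ne

lemma fst_eq_of_corona_adj_inr_inr {a b : Σ v, W v} (h : (corona G H).Adj (inr a) (inr b)) :
    a.1 = b.1 := by
  simp only [corona, coronaRel, fromRel_adj] at h
  obtain ⟨-, ⟨hab, -⟩ | ⟨hba, -⟩⟩ := h
  exacts [hab, hba.symm]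

variable (G H) in
def coronaBase : G →g corona G H where
  toFun := inl
  map_rel' := corona_adj_inl_inl.mpr

variable (G H) in
def coronaCopy (k : V) : H k ↪g corona G H where
  toFun z := inr ⟨k, z⟩
  inj' _ _ h := by simpa using h
  map_rel_iff' := corona_adj_inr_inr_mk

lemma corona_adj_inl_coronaCopy (k : V) (z : W k) :
    (corona G H).Adj (inl k) (coronaCopy G H k z) :=
  corona_adj_inl_inr.mpr rfl

lemma eq_inl_of_corona_adj_coronaCopy {u : V ⊕ Σ v, W v} {k : V} {z : W k}
    (hu : u ∉ Set.range (coronaCopy G H k)) (h : (corona G H).Adj u (coronaCopy G H k z)) :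
    u = inl k := by
  rcases u with a | ⟨j, y⟩
  · rw [corona_adj_inl_inr.mp h]
  · obtain rfl : j = k := fst_eq_of_corona_adj_inr_inr h
    exact absurd ⟨y, rfl⟩ hu

lemma corona_connected (hG : G.Connected) : (corona G H).Connected := by
  have hbase : ∀ u, (corona G H).Reachable u (inl (Sum.elim id Sigma.fst u)) := by
    rintro (a | ⟨k, z⟩)
    · rfl
    · exact (corona_adj_inl_coronaCopy k z).reachable.symm
  have : Nonempty (V ⊕ Σ v, W v) := ⟨inl hG.nonempty.some⟩
  refine ⟨fun u v => (hbase u).trans (Reachable.trans ?_ (hbase v).symm)⟩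
  exact (hG.preconnected _ _).map (coronaBase G H)

lemma inl_notMem_range_coronaCopy (a k : V) : inl a ∉ Set.range (coronaCopy G H k) := by
  rintro ⟨z, h⟩
  cases h

lemma coronaCopy_notMem_range_coronaCopy {j k : V} (hjk : j ≠ k) (y : W j) :
    coronaCopy G H j y ∉ Set.range (coronaCopy G H k) := by
  rintro ⟨z, h⟩
  exact hjk (congrArg Sigma.fst (inr_injective h)).symm

lemma corona_dist_coronaCopy (hG : G.Connected) {k : V} {u : V ⊕ Σ v, W v}
    (hu : u ∉ Set.range (coronaCopy G H k)) (z : W k) :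
    (corona G H).dist u (coronaCopy G H k z) = (corona G H).dist u (inl k) + 1 :=
  (corona_connected hG).dist_eq_dist_add_one_of_gate
    (by rintro _ ⟨z, rfl⟩; exact corona_adj_inl_coronaCopy k z)
    (by rintro v hv _ ⟨z, rfl⟩ h; exact eq_inl_of_corona_adj_coronaCopy hv h) hu ⟨z, rfl⟩

lemma corona_dist_coronaCopy_coronaCopy_le_two {k : V} (x z : W k) :
    (corona G H).dist (coronaCopy G H k x) (coronaCopy G H k z) ≤ 2 := by
  simpa using dist_le (Walk.cons (corona_adj_inl_coronaCopy k x).symm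
    (corona_adj_inl_coronaCopy k z).toWalk)

lemma corona_dist_coronaCopy_coronaCopy_of_not_adj {k : V} {x z : W k} (hxz : x ≠ z)
    (h : ¬ (H k).Adj x z) : (corona G H).dist (coronaCopy G H k x) (coronaCopy G H k z) = 2 :=
  dist_eq_two_of_adj_of_adj ((coronaCopy G H k).injective.ne hxz)
    ((coronaCopy G H k).map_adj_iff.not.mpr h) (corona_adj_inl_coronaCopy k x).symm
    (corona_adj_inl_coronaCopy k z)

end Corona

section CoronaMetricDimension
open Sum
variable {V : Type*} [Fintype V] {W : V → Type*} [∀ v, Fintype (W v)] {G : SimpleGraph V}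
  {H : ∀ v, SimpleGraph (W v)}

lemma card_le_card_distinguishingSet_corona {k : V} {u v : V ⊕ Σ v, W v}
    (h : ∀ z, (corona G H).dist u (coronaCopy G H k z) ≠
      (corona G H).dist v (coronaCopy G H k z)) :
    Fintype.card (W k) ≤ #(distinguishingSet (corona G H) u v) :=
  card_le_card_distinguishingSet (coronaCopy G H k).toEmbedding univ fun z _ => h z

variable [∀ v, DecidableRel (H v).Adj] {δ : ℕ}

lemma two_mul_le_card_distinguishingSet_corona_inl (hG : G.Connected)
    (hn : 2 ≤ Fintype.card V) (hreg : ∀ v, (H v).IsRegularOfDegree δ)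
    (hgirth : ∀ v, 4 ≤ (H v).girth) (a : V) {v : V ⊕ Σ v, W v} (hv : inl a ≠ v) :
    2 * δ ≤ #(distinguishingSet (corona G H) (inl a) v) := by
  have hW k := two_mul_le_card_of_isRegularOfDegree (hreg k) (hgirth k)
  have hconn := corona_connected (H := H) hG
  by_cases hva : v ∈ Set.range (coronaCopy G H a)
  · obtain ⟨k, hka⟩ := Fintype.exists_ne_of_one_lt_card hn a
    obtain ⟨y, rfl⟩ := hva
    refine (hW k).trans (card_le_card_distinguishingSet_corona fun z => ?_)
    rw [corona_dist_coronaCopy hG (inl_notMem_range_coronaCopy a k),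
      corona_dist_coronaCopy hG (coronaCopy_notMem_range_coronaCopy hka.symm y),
      dist_comm (u := coronaCopy G H a y),
      corona_dist_coronaCopy hG (inl_notMem_range_coronaCopy k a), dist_comm (u := inl k)]
    omega
  · refine (hW a).trans (card_le_card_distinguishingSet_corona fun z => ?_)
    rw [corona_dist_coronaCopy hG (inl_notMem_range_coronaCopy a a),
      corona_dist_coronaCopy hG hva, SimpleGraph.dist_self]
    have := hconn.pos_dist_of_ne hv.symm
    omega

lemma two_mul_le_card_distinguishingSet_corona_coronaCopy (hG : G.Connected)
    (hreg : ∀ v, (H v).IsRegularOfDegree δ) (hgirth : ∀ v, 5 ≤ (H v).girth) {i j : V}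
    (x : W i) (y : W j) (hxy : coronaCopy G H i x ≠ coronaCopy G H j y) :
    2 * δ ≤ #(distinguishingSet (corona G H) (coronaCopy G H i x) (coronaCopy G H j y)) := by
  classical
  have hconn := corona_connected (H := H) hG
  by_cases hij : i = j
  · subst hij
    have hxy : x ≠ y := fun h => hxy (congrArg _ h)
    refine (two_mul_le_card_symmDiff_neighborFinset_union (hreg i) (hgirth i) hxy).trans
      (card_le_card_distinguishingSet (coronaCopy G H i).toEmbedding _ fun z hz => ?_)
    exact (coronaCopy G H i).dist_ne_dist_of_mem hconn hxy
      (by simpa [mem_symmDiff, Set.mem_symmDiff] using hz)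
  · refine (two_mul_le_card_of_isRegularOfDegree (hreg i) (Nat.le_of_succ_le (hgirth i))).trans
      (card_le_card_distinguishingSet_corona fun z => ?_)
    have hle := corona_dist_coronaCopy_coronaCopy_le_two (G := G) (H := H) x z
    rw [corona_dist_coronaCopy hG (coronaCopy_notMem_range_coronaCopy (Ne.symm hij) y),
      dist_comm (u := coronaCopy G H j y),
      corona_dist_coronaCopy hG (inl_notMem_range_coronaCopy i j)]
    have := hconn.pos_dist_of_ne (inl_injective.ne hij)
    omega

lemma two_mul_le_card_distinguishingSet_corona (hG : G.Connected) (hn : 2 ≤ Fintype.card V)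
    (hreg : ∀ v, (H v).IsRegularOfDegree δ) (hgirth : ∀ v, 5 ≤ (H v).girth)
    (u v : V ⊕ Σ v, W v) (huv : u ≠ v) : 2 * δ ≤ #(distinguishingSet (corona G H) u v) := by
  have hgirth4 v : 4 ≤ (H v).girth := Nat.le_of_succ_le (hgirth v)
  rcases u with a | ⟨i, x⟩
  · exact two_mul_le_card_distinguishingSet_corona_inl hG hn hreg hgirth4 a huv
  rcases v with b | ⟨j, y⟩
  · rw [distinguishingSet_comm]
    exact two_mul_le_card_distinguishingSet_corona_inl hG hn hreg hgirth4 b huv.symm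
  · exact two_mul_le_card_distinguishingSet_corona_coronaCopy hG hreg hgirth x y huv

lemma card_distinguishingSet_coronaCopy_le (hG : G.Connected) {k : V}
    (hreg : (H k).IsRegularOfDegree δ) (hgirth : 4 ≤ (H k).girth) {x y : W k}
    (hxy : (H k).Adj x y) :
    #(distinguishingSet (corona G H) (coronaCopy G H k x) (coronaCopy G H k y)) ≤ 2 * δ := by
  classical
  rw [← card_neighborFinset_union_of_adj hreg hgirth hxy,
    ← card_map (coronaCopy G H k).toEmbedding]
  refine card_le_card fun w hw => ?_
  have hw := mem_distinguishingSet.mp hw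
  by_cases hwk : w ∈ Set.range (coronaCopy G H k)
  · obtain ⟨z, rfl⟩ := hwk
    refine mem_map_of_mem _ (mem_union.mpr ?_)
    by_contra! hz
    simp only [mem_neighborFinset] at hz
    have hzx : x ≠ z := fun h => hz.2 (h ▸ hxy.symm)
    have hzy : y ≠ z := fun h => hz.1 (h ▸ hxy)
    exact hw (by rw [corona_dist_coronaCopy_coronaCopy_of_not_adj hzx hz.1,
      corona_dist_coronaCopy_coronaCopy_of_not_adj hzy hz.2])
  · refine absurd ?_ hw
    rw [dist_comm, corona_dist_coronaCopy hG hwk, dist_comm (u := coronaCopy G H k y),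
      corona_dist_coronaCopy hG hwk]

end CoronaMetricDimension

/-- the corona of a connected graph of order ≥ 2 with a family of δ-regular
graphs of girth at least 5 is 2δ-metric dimensional. -/
theorem stmt_7 {V : Type*} [Fintype V] {W : V → Type*} [∀ v, Fintype (W v)]
    (G : SimpleGraph V) (hG : G.Connected) (hn : 2 ≤ Fintype.card V)
    (H : ∀ v, SimpleGraph (W v)) [∀ v, DecidableRel (H v).Adj] (δ : ℕ)
    (hreg : ∀ v, (H v).IsRegularOfDegree δ) (hgirth : ∀ v, 5 ≤ (H v).girth) :
    kMetricDimensional (corona G H) (2 * δ) := by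
  obtain ⟨a⟩ : Nonempty V := Fintype.card_pos_iff.mp (by omega)
  have ha : 4 ≤ (H a).girth := Nat.le_of_succ_le (hgirth a)
  obtain ⟨x, y, hxy⟩ := exists_adj_of_girth_ne_zero (G := H a) (by omega)
  exact kMetricDimensional_of_forall_le_card
    (two_mul_le_card_distinguishingSet_corona hG hn hreg hgirth)
    ⟨_, _, (coronaCopy G H a).injective.ne hxy.ne,
      card_distinguishingSet_coronaCopy_le hG (hreg a) ha hxy⟩
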